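/- Let N : ℕ → ℕ satisfy N(d) > d for all d and d/N(d) → δ as d → ∞ with δ ∈ [0,1]. If δ > 1/2 then P_{d,N(d)} → 1, and if δ < 1/2 then P_{d,N(d)} → 0; moreover the convergence is exponentially fast: there exist ε > 0 and D ∈ ℕ such that for all d ≥ D one has 1 - P_{d,N(d)} ≤ exp(-ε·(N(d)-1)) in the first case and P_{d,N(d)} ≤ exp(-ε·(N(d)-1)) in the second case. -/

import Mathlib

open Filter Finset Real Topology

/-- The Wendel probability `P_{d,N} = 2^{1-N} · Σ_{i=0}^{d-1} C(N-1, i)`. -/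
noncomputable def wendelP (d N : ℕ) : ℝ :=
  (∑ i ∈ Finset.range d, ((N - 1).choose i : ℝ)) / 2 ^ (N - 1)

lemma sum_choose_split (n d : ℕ) (hd : d ≤ n) :
    ∑ i ∈ range d, n.choose i + ∑ i ∈ range (n + 1 - d), n.choose i = 2 ^ n := by
  have h1 : ∑ i ∈ Finset.Ico d (n+1), n.choose i
      = ∑ j ∈ range (n + 1 - d), n.choose (d + j) := by
    rw [Finset.sum_Ico_eq_sum_range]
  have h2 : ∀ j ∈ range (n + 1 - d), n.choose (d + j) = n.choose (n + 1 - d - 1 - j) := by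
    intro j hj
    rw [Finset.mem_range] at hj
    have hdj : d + j ≤ n := by omega
    rw [← Nat.choose_symm hdj]
    congr 1
    omega
  have h3 : ∑ j ∈ range (n + 1 - d), n.choose (d + j)
      = ∑ j ∈ range (n + 1 - d), n.choose j := by
    rw [Finset.sum_congr rfl h2, Finset.sum_range_reflect]
  have h4 : ∑ i ∈ range d, n.choose i + ∑ i ∈ Finset.Ico d (n+1), n.choose i
      = ∑ i ∈ range (n+1), n.choose i := by
    rw [Finset.range_eq_Ico, Finset.range_eq_Ico]
    exact Finset.sum_Ico_consecutive (fun i => n.choose i) (by omega : 0 ≤ d) (by omega : d ≤ n+1)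
  rw [← Nat.sum_range_choose n, ← h4, h1, h3]

lemma chernoff (n d : ℕ) (x : ℝ) (hx0 : 0 < x) (hx1 : x ≤ 1) :
    (∑ i ∈ range d, (n.choose i : ℝ)) * x ^ (d - 1) ≤ (1 + x) ^ n := by
  have h1 : (∑ i ∈ range d, (n.choose i : ℝ)) * x ^ (d - 1)
      ≤ ∑ i ∈ range d, (n.choose i : ℝ) * x ^ i := by
    rw [Finset.sum_mul]
    apply Finset.sum_le_sum
    intro i hi
    rw [Finset.mem_range] at hi
    have : x ^ (d - 1) ≤ x ^ i := pow_le_pow_of_le_one hx0.le hx1 (by omega)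
    have hc : (0:ℝ) ≤ (n.choose i : ℝ) := by positivity
    nlinarith
  have h2 : ∑ i ∈ range d, (n.choose i : ℝ) * x ^ i
      ≤ ∑ i ∈ range (max d (n+1)), (n.choose i : ℝ) * x ^ i := by
    apply Finset.sum_le_sum_of_subset_of_nonneg
    · exact Finset.range_subset_range.2 (le_max_left _ _)
    · intro i _ _; positivity
  have h3 : ∑ i ∈ range (max d (n+1)), (n.choose i : ℝ) * x ^ i
      = ∑ i ∈ range (n+1), (n.choose i : ℝ) * x ^ i := by
    symm
    apply Finset.sum_subset (Finset.range_subset_range.2 (le_max_right _ _))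
    intro i _ hi
    rw [Finset.mem_range, not_lt] at hi
    rw [Nat.choose_eq_zero_of_lt (by omega)]
    simp
  have h4 : ∑ i ∈ range (n+1), (n.choose i : ℝ) * x ^ i = (1 + x) ^ n := by
    rw [show (1:ℝ) + x = x + 1 by ring, add_pow]
    apply Finset.sum_congr rfl
    intro i _
    ring
  linarith

lemma entropy_lt (α : ℝ) (h0 : 0 < α) (h2 : α < 1/2) :
    Real.log ((1 + α / (1 - α)) / 2) - α * Real.log (α / (1 - α)) < 0 := by
  have h1 : α < 1 := by linarith
  have h1' : 0 < 1 - α := by linarith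
  have hne : α ≠ 1 - α := by intro h; linarith
  have key : α * Real.log (1/α) + (1 - α) * Real.log (1/(1-α)) < Real.log 2 := by
    have := strictConcaveOn_log_Ioi.2 (x := 1/α) (y := 1/(1-α))
      (by rw [Set.mem_Ioi]; positivity) (by rw [Set.mem_Ioi]; positivity)
      (by
        intro h
        apply hne
        field_simp at h
        linarith)
      h0 h1' (by ring)
    have heq : α • (1/α) + (1 - α) • (1/(1-α)) = 2 := by
      rw [smul_eq_mul, smul_eq_mul, mul_one_div_cancel h0.ne', mul_one_div_cancel h1'.ne']
      norm_num
    rw [heq] at this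
    simpa using this
  have hlog1 : Real.log (1/α) = - Real.log α := by rw [one_div, Real.log_inv]
  have hlog2 : Real.log (1/(1-α)) = - Real.log (1-α) := by rw [one_div, Real.log_inv]
  rw [hlog1, hlog2] at key
  have e1 : (1 + α / (1 - α)) / 2 = 1 / (2 * (1 - α)) := by field_simp; ring
  have e2 : Real.log ((1 + α / (1 - α)) / 2) = -(Real.log 2 + Real.log (1 - α)) := by
    rw [e1, one_div, Real.log_inv, Real.log_mul (by norm_num) (by linarith)]
  have e3 : Real.log (α / (1 - α)) = Real.log α - Real.log (1 - α) :=
    Real.log_div (by linarith) (by linarith)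
  rw [e2, e3]
  nlinarith [key]

lemma tail_bound (α : ℝ) (h0 : 0 < α) (h2 : α < 1/2) :
    ∃ ε > (0:ℝ), ∀ n d : ℕ, 1 ≤ d → (d : ℝ) - 1 ≤ α * n →
      (∑ i ∈ range d, (n.choose i : ℝ)) / 2 ^ n ≤ Real.exp (-ε * n) := by
  set x : ℝ := α / (1 - α) with hxdef
  have h1' : (0:ℝ) < 1 - α := by linarith
  have hx0 : 0 < x := by positivity
  have hx1 : x < 1 := by rw [hxdef, div_lt_one h1']; linarith
  have hlogx : Real.log x < 0 := Real.log_neg hx0 hx1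
  refine ⟨α * Real.log x - Real.log ((1 + x) / 2), by linarith [entropy_lt α h0 h2], ?_⟩
  intro n d hd1 hdn
  have h2n : (0:ℝ) < 2 ^ n := by positivity
  have hxp : (0:ℝ) < x ^ (d - 1) := by positivity
  have key : (∑ i ∈ range d, (n.choose i : ℝ)) / 2 ^ n
      ≤ ((1 + x) / 2) ^ n / x ^ (d - 1) := by
    rw [div_pow, div_div, div_le_div_iff₀ h2n (by positivity)]
    have := mul_le_mul_of_nonneg_right (chernoff n d x hx0 hx1.le) h2n.le
    nlinarith
  have hy : (0:ℝ) < (1 + x) / 2 := by positivity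
  have e1 : ((1 + x) / 2) ^ n = Real.exp ((n : ℝ) * Real.log ((1 + x) / 2)) := by
    rw [Real.exp_nat_mul, Real.exp_log hy]
  have e2 : x ^ (d - 1) = Real.exp (((d - 1 : ℕ) : ℝ) * Real.log x) := by
    rw [Real.exp_nat_mul, Real.exp_log hx0]
  have hcast : ((d - 1 : ℕ) : ℝ) = (d : ℝ) - 1 := by
    have : 1 ≤ d := hd1; push_cast [this]; ring
  have e3 : ((1 + x) / 2) ^ n / x ^ (d - 1)
      = Real.exp ((n : ℝ) * Real.log ((1 + x) / 2) - ((d:ℝ) - 1) * Real.log x) := by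
    rw [e1, e2, hcast, ← Real.exp_sub]
  refine key.trans ?_
  rw [e3]
  apply Real.exp_le_exp.2
  have : ((d:ℝ) - 1) * Real.log x ≥ (α * n) * Real.log x := by
    apply mul_le_mul_of_nonpos_right hdn hlogx.le
  nlinarith

theorem wendel_threshold (δ : ℝ) (hδ0 : 0 ≤ δ) (hδ1 : δ ≤ 1) (N : ℕ → ℕ)
    (hN : ∀ d, d < N d)
    (hlim : Tendsto (fun d : ℕ => (d : ℝ) / (N d : ℝ)) atTop (𝓝 δ)) :
    (1 / 2 < δ →
      Tendsto (fun d : ℕ => wendelP d (N d)) atTop (𝓝 1) ∧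
        ∃ ε > (0 : ℝ), ∃ D : ℕ, ∀ d ≥ D,
          1 - wendelP d (N d) ≤ Real.exp (-ε * ((N d : ℝ) - 1))) ∧
    (δ < 1 / 2 →
      Tendsto (fun d : ℕ => wendelP d (N d)) atTop (𝓝 0) ∧
        ∃ ε > (0 : ℝ), ∃ D : ℕ, ∀ d ≥ D,
          wendelP d (N d) ≤ Real.exp (-ε * ((N d : ℝ) - 1))) := by
  -- basic facts
  have hNcast : ∀ d, ((N d - 1 : ℕ) : ℝ) = (N d : ℝ) - 1 := by
    intro d
    have h1 : 1 ≤ N d := by have := hN d; omega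
    rw [Nat.cast_sub h1, Nat.cast_one]
  have hsplit : ∀ d, wendelP d (N d)
      + (∑ i ∈ range (N d - d), (((N d - 1).choose i : ℝ))) / 2 ^ (N d - 1) = 1 := by
    intro d
    have hd : d ≤ N d - 1 := by have := hN d; omega
    have h := sum_choose_split (N d - 1) d hd
    have hk : N d - 1 + 1 - d = N d - d := by have := hN d; omega
    rw [hk] at h
    unfold wendelP
    have h2 : (0:ℝ) < 2 ^ (N d - 1) := by positivity
    rw [← add_div, div_eq_one_iff_eq h2.ne']
    exact_mod_cast h
  have hwnn : ∀ d, 0 ≤ wendelP d (N d) := by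
    intro d
    unfold wendelP
    positivity
  have hwnn' : ∀ d, 0 ≤ 1 - wendelP d (N d) := by
    intro d
    have := hsplit d
    have h2 : (0:ℝ) ≤ (∑ i ∈ range (N d - d), (((N d - 1).choose i : ℝ))) / 2 ^ (N d - 1) := by
      positivity
    linarith
  have hNinf : Tendsto (fun d : ℕ => ((N d : ℝ))) atTop atTop :=
    tendsto_atTop_mono (fun d => by exact_mod_cast (hN d).le) tendsto_natCast_atTop_atTop
  have hexp0 : ∀ ε : ℝ, 0 < ε →
      Tendsto (fun d : ℕ => Real.exp (-ε * ((N d : ℝ) - 1))) atTop (𝓝 0) := by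
    intro ε hε
    apply Real.tendsto_exp_atBot.comp
    have h1 : Tendsto (fun d : ℕ => (N d : ℝ) - 1) atTop atTop :=
      tendsto_atTop_add_const_right atTop (-1) hNinf
    exact h1.const_mul_atTop_of_neg (by linarith)
  constructor
  · -- δ > 1/2
    intro hδ
    set α : ℝ := 3/4 - δ/2 with hα
    have h0 : 0 < α := by rw [hα]; linarith
    have hα2 : α < 1/2 := by rw [hα]; linarith
    have hδα : 1 - α < δ := by rw [hα]; linarith
    obtain ⟨ε, hε, hb⟩ := tail_bound α h0 hα2
    have hev : ∀ᶠ d : ℕ in atTop, 1 - α < (d : ℝ) / (N d : ℝ) :=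
      hlim.eventually_const_lt hδα
    obtain ⟨D, hD⟩ := eventually_atTop.1 hev
    have hbound : ∀ d ≥ D, 1 - wendelP d (N d) ≤ Real.exp (-ε * ((N d : ℝ) - 1)) := by
      intro d hd
      have hNpos : (0:ℝ) < N d := by
        exact_mod_cast Nat.lt_of_le_of_lt (Nat.zero_le d) (hN d)
      have hN1 : (1:ℝ) ≤ N d := by
        have : 1 ≤ N d := by have := hN d; omega
        exact_mod_cast this
      have h1 : (1 - α) * (N d : ℝ) < d := by
        have := hD d hd
        rw [lt_div_iff₀ hNpos] at this
        linarith
      have hdn : d ≤ N d - 1 := by have := hN d; omega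
      have hk1 : 1 ≤ N d - d := by have := hN d; omega
      have hkcast : ((N d - d : ℕ) : ℝ) = (N d : ℝ) - d := by
        have : d ≤ N d := (hN d).le
        push_cast [this]
        ring
      have hcond : ((N d - d : ℕ) : ℝ) - 1 ≤ α * ((N d - 1 : ℕ) : ℝ) := by
        rw [hkcast, hNcast]
        nlinarith
      have := hb (N d - 1) (N d - d) hk1 hcond
      rw [hNcast] at this
      have heq : 1 - wendelP d (N d)
          = (∑ i ∈ range (N d - d), (((N d - 1).choose i : ℝ))) / 2 ^ (N d - 1) := by
        linarith [hsplit d]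
      rw [heq]
      exact this
    refine ⟨?_, ε, hε, D, hbound⟩
    have h0' : Tendsto (fun d : ℕ => 1 - wendelP d (N d)) atTop (𝓝 0) := by
      apply squeeze_zero' (Eventually.of_forall hwnn')
        (eventually_atTop.2 ⟨D, hbound⟩) (hexp0 ε hε)
    have h1 : Tendsto (fun d : ℕ => 1 - (1 - wendelP d (N d))) atTop (𝓝 (1 - 0)) :=
      tendsto_const_nhds.sub h0'
    simpa using h1
  · -- δ < 1/2
    intro hδ
    set α : ℝ := (δ + 1/2)/2 with hα
    have h0 : 0 < α := by rw [hα]; linarith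
    have hα2 : α < 1/2 := by rw [hα]; linarith
    have hδα : δ < α := by rw [hα]; linarith
    obtain ⟨ε, hε, hb⟩ := tail_bound α h0 hα2
    have hev : ∀ᶠ d : ℕ in atTop, (d : ℝ) / (N d : ℝ) < α :=
      hlim.eventually_lt_const hδα
    obtain ⟨D₀, hD⟩ := eventually_atTop.1 hev
    set D := max D₀ 1 with hDdef
    have hbound : ∀ d ≥ D, wendelP d (N d) ≤ Real.exp (-ε * ((N d : ℝ) - 1)) := by
      intro d hd
      have hd1 : 1 ≤ d := le_trans (le_max_right _ _) hd
      have hNpos : (0:ℝ) < N d := by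
        exact_mod_cast Nat.lt_of_le_of_lt (Nat.zero_le d) (hN d)
      have hN1 : (1:ℝ) ≤ N d := by
        have : 1 ≤ N d := by have := hN d; omega
        exact_mod_cast this
      have h1 : (d : ℝ) < α * (N d : ℝ) := by
        have := hD d (le_trans (le_max_left _ _) hd)
        rw [div_lt_iff₀ hNpos] at this
        linarith
      have hcond : (d : ℝ) - 1 ≤ α * ((N d - 1 : ℕ) : ℝ) := by
        rw [hNcast]
        nlinarith
      have := hb (N d - 1) d hd1 hcond
      rw [hNcast] at this
      exact this
    refine ⟨?_, ε, hε, D, hbound⟩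
    apply squeeze_zero' (Eventually.of_forall hwnn)
      (eventually_atTop.2 ⟨D, hbound⟩) (hexp0 ε hε)
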